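/- Let X be a real Banach space, let (A_i) be an approximation scheme in X, and let Y and Z be linear subspaces of X equipped with the norm inherited from X. Suppose Y is c-far from (A_i) for some c > 0 (that is, E(S(Y), A_i) ≥ c for every i), and that E(S(Y), Z) < c. Then Z is c₁-far from (A_i), where c₁ = (c − E(S(Y),Z)) / (1 + c). -/

import Mathlib

/-!
Take `y` on the unit sphere of `Y` almost `c`-far from `A n` and `z ∈ Z` with `‖y - z‖`
almost at most `E(S(Y), Z)`. Since `A n` is a cone, `E(·, A n)` is positively homogeneous and
`1`-Lipschitz, so the normalised vector `z / ‖z‖` stays at distance at least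
`(E(y, A n) - ‖y - z‖) / ‖z‖` from `A n`, and `‖z‖ ≤ 1 + ‖y - z‖ < 1 + c`.
-/

open Metric Filter Pointwise

/-- `(A, K)` is an approximation scheme on `X`: the sets `A n` form a strictly increasing
chain, `A n + A n ⊆ A (K n)` with `K n ≥ n`, each `A n` is closed under scalar
multiplication, and `⋃ n, A n` is dense in `X`. -/
def IsApproximationScheme {X : Type*} [NormedAddCommGroup X] [NormedSpace ℝ X]
    (A : ℕ → Set X) (K : ℕ → ℕ) : Prop :=
  (∀ n, A n ⊂ A (n + 1)) ∧
  (∀ n, n ≤ K n ∧ A n + A n ⊆ A (K n)) ∧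
  (∀ (n : ℕ) (c : ℝ), c • A n ⊆ A n) ∧
  Dense (⋃ n, A n)

/-- Admissible error sequences: nonnegative, nonincreasing, tending to `0`. -/
def NullSeq (ε : ℕ → ℝ) : Prop :=
  (∀ n, 0 ≤ ε n) ∧ Antitone ε ∧ Tendsto ε atTop (nhds 0)

/-- `E(S(Y), Z)`: the supremum of the best approximation errors `E(y, Z)` over the
unit sphere of `Y`. -/
noncomputable def sphereSupDist {X : Type*} [NormedAddCommGroup X] (Y Z : Set X) : ℝ :=
  sSup ((fun y => Metric.infDist y Z) '' {y ∈ Y | ‖y‖ = 1})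

section Cone

variable {X : Type*} [NormedAddCommGroup X] [NormedSpace ℝ X] {A : Set X}

lemma smul_set_eq_of_forall_smul_subset (hA : ∀ r : ℝ, r • A ⊆ A) {r : ℝ} (hr : r ≠ 0) :
    r • A = A :=
  (hA r).antisymm ((Set.subset_smul_set_iff₀ hr).2 (hA r⁻¹))

lemma infDist_smul_of_forall_smul_subset (hA : ∀ r : ℝ, r • A ⊆ A) {r : ℝ} (hr : r ≠ 0)
    (x : X) : infDist (r • x) A = |r| * infDist x A := by
  rw [← Real.norm_eq_abs, ← infDist_smul₀ hr, smul_set_eq_of_forall_smul_subset hA hr]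

lemma ne_zero_of_norm_sub_lt_infDist (hA : ∀ r : ℝ, r • A ⊆ A) {y z : X}
    (h : ‖y - z‖ < infDist y A) : z ≠ 0 := by
  rintro rfl
  obtain ⟨a, ha⟩ : A.Nonempty :=
    Set.nonempty_iff_ne_empty.2 fun hA_empty => by simp [hA_empty, (norm_nonneg y).not_gt] at h
  have h0 : (0 : X) ∈ A := by simpa using hA 0 (Set.smul_mem_smul_set ha)
  simpa using h.trans_le (infDist_le_dist_of_mem h0)

lemma div_le_infDist_inv_norm_smul (hA : ∀ r : ℝ, r • A ⊆ A) {y z : X} (hy : ‖y‖ = 1)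
    (h : ‖y - z‖ < infDist y A) :
    (infDist y A - ‖y - z‖) / (1 + ‖y - z‖) ≤ infDist (‖z‖⁻¹ • z) A := by
  have hz : 0 < ‖z‖ := norm_pos_iff.2 (ne_zero_of_norm_sub_lt_infDist hA h)
  have hz_le : ‖z‖ ≤ 1 + ‖y - z‖ := by
    simpa [hy, norm_sub_rev] using norm_le_norm_add_norm_sub' z y
  have hLip : infDist y A - ‖y - z‖ ≤ infDist z A := by
    linarith [infDist_le_infDist_add_dist (x := y) (y := z) (s := A), dist_eq_norm y z]
  rw [infDist_smul_of_forall_smul_subset hA (inv_ne_zero hz.ne'), abs_of_pos (inv_pos.2 hz),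
    inv_mul_eq_div]
  calc (infDist y A - ‖y - z‖) / (1 + ‖y - z‖) ≤ (infDist y A - ‖y - z‖) / ‖z‖ :=
        div_le_div_of_nonneg_left (by linarith) hz hz_le
    _ ≤ infDist z A / ‖z‖ := by gcongr

end Cone

lemma infDist_le_sphereSupDist {X : Type*} [NormedAddCommGroup X] {Y Z : Set X}
    (hZ : (0 : X) ∈ Z) {y : X} (hyY : y ∈ Y) (hy : ‖y‖ = 1) :
    infDist y Z ≤ sphereSupDist Y Z := by
  refine le_csSup ⟨1, ?_⟩ ⟨y, ⟨hyY, hy⟩, rfl⟩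
  rintro _ ⟨x, ⟨-, hx⟩, rfl⟩
  simpa [hx] using infDist_le_dist_of_mem (x := x) hZ

lemma sphereSupDist_nonneg {X : Type*} [NormedAddCommGroup X] (Y Z : Set X) :
    0 ≤ sphereSupDist Y Z :=
  Real.sSup_nonneg fun _ ⟨_, _, hx⟩ => hx ▸ infDist_nonneg

theorem far_perturbation_general
    {X : Type*} [NormedAddCommGroup X] [NormedSpace ℝ X]
    (A : ℕ → Set X) (K : ℕ → ℕ) (hA : IsApproximationScheme A K)
    (Y Z : Submodule ℝ X) (c : ℝ)
    (hYfar : ∀ n : ℕ, ∀ δ > (0 : ℝ), ∃ y ∈ Y, ‖y‖ = 1 ∧ infDist y (A n) > c - δ)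
    (hYZ : sphereSupDist (Y : Set X) (Z : Set X) < c) :
    ∀ n : ℕ, ∀ δ > (0 : ℝ), ∃ z ∈ Z, ‖z‖ = 1 ∧
      infDist z (A n) > (c - sphereSupDist (Y : Set X) (Z : Set X)) / (1 + c) - δ := by
  intro n δ hδ
  set b := sphereSupDist (Y : Set X) (Z : Set X)
  have hb : 0 ≤ b := sphereSupDist_nonneg _ _
  set t := min ((c - b) / 2) (δ / 2)
  have ht : 0 < t := lt_min (by linarith) (by linarith)
  have htc : t ≤ (c - b) / 2 := min_le_left _ _
  have htδ : t ≤ δ / 2 := min_le_right _ _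
  obtain ⟨y, hyY, hy, hyA⟩ := hYfar n t ht
  obtain ⟨z, hzZ, hyz⟩ : ∃ z ∈ Z, dist y z < b + t :=
    (infDist_lt_iff ⟨0, Z.zero_mem⟩).1
      ((infDist_le_sphereSupDist Z.zero_mem hyY hy).trans_lt (by linarith))
  rw [dist_eq_norm] at hyz
  have hlt : ‖y - z‖ < infDist y (A n) := by linarith
  refine ⟨‖z‖⁻¹ • z, Z.smul_mem _ hzZ,
    norm_smul_inv_norm (ne_zero_of_norm_sub_lt_infDist (hA.2.2.1 n) hlt), ?_⟩
  calc (c - b) / (1 + c) - δ ≤ (c - b - 2 * t) / (1 + c) := by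
        rw [sub_div (c - b)]
        have : 2 * t / (1 + c) ≤ 2 * t := div_le_self (by linarith) (by linarith)
        linarith
    _ < (infDist y (A n) - ‖y - z‖) / (1 + c) :=
        div_lt_div_of_pos_right (by linarith) (by linarith)
    _ ≤ (infDist y (A n) - ‖y - z‖) / (1 + ‖y - z‖) :=
        div_le_div_of_nonneg_left (by linarith) (by positivity) (by linarith)
    _ ≤ infDist (‖z‖⁻¹ • z) (A n) := div_le_infDist_inv_norm_smul (hA.2.2.1 n) hy hlt

/-- If `Y` is `c`-far from an approximation scheme `(A n)` and `E(S(Y), Z) < c`, then `Z`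
is `c₁`-far from `(A n)` with `c₁ = (c - E(S(Y), Z)) / (1 + c)`. -/
theorem far_perturbation
    {X : Type*} [NormedAddCommGroup X] [NormedSpace ℝ X] [CompleteSpace X]
    (A : ℕ → Set X) (K : ℕ → ℕ) (hA : IsApproximationScheme A K)
    (Y Z : Submodule ℝ X) (c : ℝ) (hc : 0 < c)
    (hYfar : ∀ n : ℕ, ∀ δ > (0 : ℝ), ∃ y ∈ Y, ‖y‖ = 1 ∧ infDist y (A n) > c - δ)
    (hYZ : sphereSupDist (Y : Set X) (Z : Set X) < c) :
    ∀ n : ℕ, ∀ δ > (0 : ℝ), ∃ z ∈ Z, ‖z‖ = 1 ∧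
      infDist z (A n) > (c - sphereSupDist (Y : Set X) (Z : Set X)) / (1 + c) - δ :=
  far_perturbation_general A K hA Y Z c hYfar hYZ
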